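/- arXiv:2205.02042 — 2 statements merged into one kernel-verified Lean document; each statement's English description precedes it below -/
import Mathlib

section
/- Let A ∈ T_{m,n}, q ∈ ℝⁿ, and suppose x, w, z₁, z₂ ∈ ℝⁿ are all nonnegative and satisfy: (i) w − z₁ + (m−1)(Â x^{m−2})ᵀ(x − z₂) = 0, (ii) z₁ᵢ xᵢ = 0 for all i, (iii) z₂ᵢ wᵢ + xᵢ wᵢ = 0 for all i, and (iv) w = A x^{m−1} + q. Then x is a solution of the tensor complementarity problem TCP(q,A), i.e. x ≥ 0, A x^{m−1} + q ≥ 0, and xᵀ(A x^{m−1} + q) = 0. -/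
/-- `(A x^{m-1})_i`, tensor represented by first index and a tail of indices. -/
noncomputable def tvec {n mm : ℕ} (A : Fin n → (Fin mm → Fin n) → ℝ)
    (x : Fin n → ℝ) (i : Fin n) : ℝ :=
  ∑ j : Fin mm → Fin n, A i j * ∏ k, x (j k)

/-- Partial symmetrization in the last `m − 1` indices. -/
noncomputable def psym {n mm : ℕ} (A : Fin n → (Fin mm → Fin n) → ℝ) :
    Fin n → (Fin mm → Fin n) → ℝ :=
  fun i j => (1 / (Nat.factorial mm : ℝ)) * ∑ π : Equiv.Perm (Fin mm), A i (j ∘ π)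

/-- `(A x^{m-2})_{ij}`. -/
noncomputable def tmat {n mm : ℕ} (A : Fin n → (Fin (mm + 1) → Fin n) → ℝ)
    (x : Fin n → ℝ) : Matrix (Fin n) (Fin n) ℝ :=
  Matrix.of fun i j => ∑ t : Fin mm → Fin n, A i (Fin.cons j t) * ∏ k, x (t k)

/-- Any solution of the limiting system (3.7) yields a solution of TCP(q, A):
the tensor has order `m = mm + 2`, so `m − 1 = mm + 1`. -/
theorem limit_system_solves_TCP {n mm : ℕ} (A : Fin n → (Fin (mm + 1) → Fin n) → ℝ)
    (q x w z1 z2 : Fin n → ℝ)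
    (hx : ∀ i, 0 ≤ x i) (hw : ∀ i, 0 ≤ w i) (hz1 : ∀ i, 0 ≤ z1 i) (hz2 : ∀ i, 0 ≤ z2 i)
    (h1 : ∀ i, w i - z1 i
        + ((mm : ℝ) + 1) * ∑ j, tmat (psym A) x j i * (x j - z2 j) = 0)
    (h2 : ∀ i, z1 i * x i = 0)
    (h3 : ∀ i, z2 i * w i + x i * w i = 0)
    (h4 : ∀ i, w i = tvec A x i + q i) :
    (∀ i, 0 ≤ x i) ∧ (∀ i, 0 ≤ tvec A x i + q i) ∧
      ∑ i, x i * (tvec A x i + q i) = 0 := by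
  refine ⟨hx, fun i => h4 i ▸ hw i, ?_⟩
  have hxw : ∀ i, x i * w i = 0 := by
    intro i
    have h := h3 i
    have h1' : 0 ≤ z2 i * w i := mul_nonneg (hz2 i) (hw i)
    have h2' : 0 ≤ x i * w i := mul_nonneg (hx i) (hw i)
    linarith
  calc ∑ i, x i * (tvec A x i + q i) = ∑ i, x i * w i := by
        simp only [h4]
    _ = 0 := by simp [hxw]
end

section
/- Let A ∈ T_{m,n}, let μ̄ ∈ (0,1), and let ξ, ζ, η ∈ ℝⁿ be nonnegative vectors with eᵀξ = 1 satisfying: ξᵢηᵢ = 0 for all i, (1−μ̄)ξᵢζᵢ = 0 for all i, ζ = (1−μ̄)·A ξ^{m−1}, and (1−μ̄)[ξᵀζ − ξᵀη + (m−1)(Â ξ^{m−1})ᵀξ] + μ̄·ξᵀξ = 0. Then a contradiction follows; i.e., no such ξ, ζ, η exist. -/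
lemma tvec_comp_perm {n mm : ℕ} (A : Fin n → (Fin mm → Fin n) → ℝ) (π : Equiv.Perm (Fin mm))
    (x : Fin n → ℝ) (i : Fin n) :
    tvec (fun i j => A i (j ∘ π)) x i = tvec A x i := by
  refine Fintype.sum_equiv (π.symm.arrowCongr (Equiv.refl (Fin n))) _ _ fun j => ?_
  -- `π.symm.arrowCongr (Equiv.refl _)` sends `j` to `j ∘ π`
  rw [← Equiv.prod_comp π fun k => x (j k)]
  rfl

lemma tvec_psym {n mm : ℕ} (A : Fin n → (Fin mm → Fin n) → ℝ) (x : Fin n → ℝ) (i : Fin n) :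
    tvec (psym A) x i = tvec A x i := by
  have hfact : (Nat.factorial mm : ℝ) ≠ 0 := Nat.cast_ne_zero.mpr mm.factorial_ne_zero
  calc tvec (psym A) x i
      = 1 / (Nat.factorial mm : ℝ) *
          ∑ π : Equiv.Perm (Fin mm), tvec (fun i j => A i (j ∘ π)) x i := by
        simp only [tvec, psym, mul_assoc, Finset.sum_mul, ← Finset.mul_sum]
        rw [Finset.sum_comm]
    _ = tvec A x i := by
        simp only [tvec_comp_perm, Finset.sum_const, Finset.card_univ, Fintype.card_perm,
          Fintype.card_fin, nsmul_eq_mul]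
        field_simp

theorem no_limit_point_subcase_i_general {n mm : ℕ} (A : Fin n → (Fin (mm + 1) → Fin n) → ℝ)
    (μ : ℝ) (hμ : μ ∈ Set.Ioo (0 : ℝ) 1) (ξ ζ η : Fin n → ℝ)
    (hsum : ∑ i, ξ i = 1)
    (h2 : ∀ i, ξ i * η i = 0)
    (h3 : ∀ i, (1 - μ) * (ξ i * ζ i) = 0)
    (h4 : ∀ i, ζ i = (1 - μ) * tvec A ξ i)
    (h1 : (1 - μ) * ((∑ i, ξ i * ζ i) - (∑ i, ξ i * η i)
        + ((mm : ℝ) + 1) * ∑ i, tvec (psym A) ξ i * ξ i) + μ * ∑ i, ξ i * ξ i = 0) :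
    False := by
  obtain ⟨hμ0, hμ1⟩ := hμ
  have hμ' : 1 - μ ≠ 0 := sub_ne_zero.mpr hμ1.ne'
  have hξζ : ∀ i, ξ i * ζ i = 0 := fun i => (mul_eq_zero.mp (h3 i)).resolve_left hμ'
  have hξA : ∀ i, tvec (psym A) ξ i * ξ i = 0 := fun i => by
    rw [tvec_psym]
    exact (mul_eq_zero.mp (by linear_combination hξζ i - ξ i * h4 i)).resolve_left hμ'
  simp only [hξζ, h2, hξA, Finset.sum_const_zero, sub_zero, mul_zero, zero_add] at h1
  have hsq : ∑ i, ξ i * ξ i = 0 := (mul_eq_zero.mp h1).resolve_left hμ0.ne'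
  rw [Finset.sum_mul_self_eq_zero_iff] at hsq
  simp [hsq] at hsum

/-- No nonnegative `ξ, ζ, η` with `eᵀξ = 1` can satisfy the limiting equations of
Subcase (i) of the boundedness theorem (tensor order `m = mm + 2`, `m − 1 = mm + 1`). -/
theorem no_limit_point_subcase_i {n mm : ℕ} (A : Fin n → (Fin (mm + 1) → Fin n) → ℝ)
    (μ : ℝ) (hμ : μ ∈ Set.Ioo (0 : ℝ) 1) (ξ ζ η : Fin n → ℝ)
    (hξ : ∀ i, 0 ≤ ξ i) (hζ : ∀ i, 0 ≤ ζ i) (hη : ∀ i, 0 ≤ η i)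
    (hsum : ∑ i, ξ i = 1)
    (h2 : ∀ i, ξ i * η i = 0)
    (h3 : ∀ i, (1 - μ) * (ξ i * ζ i) = 0)
    (h4 : ∀ i, ζ i = (1 - μ) * tvec A ξ i)
    (h1 : (1 - μ) * ((∑ i, ξ i * ζ i) - (∑ i, ξ i * η i)
        + ((mm : ℝ) + 1) * ∑ i, tvec (psym A) ξ i * ξ i) + μ * ∑ i, ξ i * ξ i = 0) :
    False :=
  no_limit_point_subcase_i_general A μ hμ ξ ζ η hsum h2 h3 h4 h1
end
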